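/- arXiv:1312.2613 — 5 statements merged into one kernel-verified Lean document; each statement's English description precedes it below -/
import Mathlib

section
/- Let G be a bipartite finite simple graph with minimum degree δ ≥ 1. Then R(G) ≤ √δ. Moreover, if δ ≥ 2, or if δ = 1 and G has a connected component of minimum degree 1 that is not isomorphic to the complete graph K₂, then R(G) < √δ. -/
open Polynomial

/-- The HL-index of a finite simple graph: the maximum of the absolute values of the
median eigenvalues of its adjacency matrix. The eigenvalues (with multiplicity) are the
roots of the characteristic polynomial; sorted increasingly in a list `l` of length `n`,
the two median eigenvalues (in the decreasing ordering λ₁ ≥ ⋯ ≥ λₙ, the ones with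
1-based indices ⌊(n+1)/2⌋ and ⌈(n+1)/2⌉) occupy the 0-based positions `(n-1)/2` and
`n/2` of `l`. -/
noncomputable def hlIndex {V : Type*} [Fintype V] (G : SimpleGraph V) : ℝ :=
  letI := Classical.decEq V
  letI : DecidableRel G.Adj := Classical.decRel _
  let n := Fintype.card V
  let l := (G.adjMatrix ℝ).charpoly.roots.sort (· ≤ ·)
  max |l.getD ((n - 1) / 2) 0| |l.getD (n / 2) 0|

/-!
A proper 2-colouring gives a diagonal ±1 matrix `D` with `D A D = -A`, so the spectrum of the
adjacency matrix `A` is symmetric about `0` and the HL-index `R` is the smallest absolute value of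
an eigenvalue. Hence `A² - R² I` is positive semidefinite, and its diagonal entry `deg v - R²` is
nonnegative at every vertex. If `R² ≥ δ`, then `A² - δ I` is positive semidefinite with a zero
diagonal entry at a vertex `v` of minimum degree, so its whole column at `v` vanishes; but a path
`v - w - u` with `u ≠ v` gives `(A²)ᵤᵥ ≥ 1`. Such a path exists when `δ ≥ 2`, and when `δ = 1`
unless the component of the degree-one vertex is a single edge.
-/

open Matrix
open scoped ComplexOrder

namespace Matrix

variable {n R : Type*} [Fintype n] [DecidableEq n]

theorem charpoly_neg [CommRing R] (A : Matrix n n R) :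
    (-A).charpoly = (-1) ^ Fintype.card n * A.charpoly.comp (-X) := by
  have h : (compRingHom (-X : R[X])).mapMatrix (charmatrix A) = -charmatrix (-A) := by
    ext i j : 1
    by_cases hij : i = j
    · subst hij
      simp [sub_eq_add_neg, add_comm]
    · simp [charmatrix_apply_ne _ _ _ hij]
  rw [charpoly, charpoly, ← coe_compRingHom_apply, RingHom.map_det, h, det_neg, ← mul_assoc,
    ← mul_pow, neg_one_mul, neg_neg, one_pow, one_mul]

theorem roots_charpoly_neg [CommRing R] [IsDomain R] (A : Matrix n n R) :
    (-A).charpoly.roots = A.charpoly.roots.map Neg.neg := by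
  rw [charpoly_neg, ← roots_comp_neg_X,
    show ((-1) ^ Fintype.card n : R[X]) = C ((-1) ^ Fintype.card n) by simp,
    roots_C_mul _ (pow_ne_zero _ (neg_ne_zero.mpr one_ne_zero))]

variable {𝕜 : Type*} [RCLike 𝕜] {A : Matrix n n 𝕜}

theorem PosSemidef.apply_eq_zero_of_apply_self_eq_zero (hA : A.PosSemidef) {j : n}
    (hj : A j j = 0) (i : n) : A i j = 0 := by
  have h := (hA.dotProduct_mulVec_zero_iff (Pi.single j 1)).mp (by simp [hj])
  simpa using congrFun h i

theorem IsHermitian.posSemidef_mul_self_sub_smul_one (hA : A.IsHermitian) {c : ℝ}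
    (hc : ∀ i, c ≤ hA.eigenvalues i ^ 2) : (A * A - c • 1).PosSemidef := by
  rw [RCLike.real_smul_eq_coe_smul (K := 𝕜), hA.spectral_theorem, ← map_mul,
    ← map_one (Unitary.conjStarAlgAut 𝕜 _ hA.eigenvectorUnitary), ← map_smul, ← map_sub,
    Unitary.conjStarAlgAut_apply, IsUnit.posSemidef_star_right_conjugate_iff Unitary.isUnit_coe,
    diagonal_mul_diagonal, ← diagonal_one, ← diagonal_smul, diagonal_sub, posSemidef_diagonal_iff]
  intro i
  simp only [Function.comp_apply, Pi.smul_apply, smul_eq_mul, mul_one, sub_nonneg]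
  exact_mod_cast (sq (hA.eigenvalues i)) ▸ hc i

end Matrix

theorem List.max_abs_getD_middle_le_abs {l : List ℝ} (hl : l.SortedLE)
    (hsymm : l = (l.map Neg.neg).reverse) {x : ℝ} (hx : x ∈ l) :
    max |l.getD ((l.length - 1) / 2) 0| |l.getD (l.length / 2) 0| ≤ |x| := by
  obtain ⟨i, hi, rfl⟩ := List.mem_iff_getElem.mp hx
  have hj : l.length / 2 < l.length := by omega
  have hk : (l.length - 1) / 2 < l.length := by omega
  have hkj : l[(l.length - 1) / 2] = -l[l.length / 2] := by
    have := List.getElem_of_eq hsymm hk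
    simp only [List.getElem_reverse, List.getElem_map, List.length_map] at this
    convert this using 3
    omega
  have hj0 : 0 ≤ l[l.length / 2] := by
    have := hl.getElem_le_getElem_of_le (hi := hk) (hj := hj) (by omega)
    linarith
  rw [List.getD_eq_getElem _ _ hk, List.getD_eq_getElem _ _ hj, hkj, abs_neg, max_self,
    abs_of_nonneg hj0]
  rcases le_or_gt (l.length / 2) i with hji | hij
  · exact (hl.getElem_le_getElem_of_le (hi := hj) (hj := hi) hji).trans (le_abs_self _)
  · have := hl.getElem_le_getElem_of_le (hi := hi) (hj := hk) (by omega)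
    rw [hkj] at this
    exact (le_neg.mpr this).trans (neg_le_abs _)

theorem Multiset.sort_eq_reverse_map_neg {m : Multiset ℝ} (hm : m.map Neg.neg = m) :
    m.sort (· ≤ ·) = ((m.sort (· ≤ ·)).map Neg.neg).reverse := by
  refine List.Perm.eq_of_pairwise' (pairwise_sort m _) ?_ ?_
  · rw [List.pairwise_reverse, List.pairwise_map]
    exact (pairwise_sort m _).imp neg_le_neg
  · rw [← coe_eq_coe, coe_reverse, ← map_coe, sort_eq, hm]

namespace SimpleGraph

variable {V : Type*} {G : SimpleGraph V}

theorem charpoly_neg_adjMatrix {R : Type*} [CommRing R] [Fintype V] [DecidableEq V]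
    [DecidableRel G.Adj] (hG : G.Colorable 2) :
    (-G.adjMatrix R).charpoly = (G.adjMatrix R).charpoly := by
  obtain ⟨c⟩ := hG
  let σ : Fin 2 → R := ![1, -1]
  have hsq : diagonal (σ ∘ c) * diagonal (σ ∘ c) = 1 := by
    rw [diagonal_mul_diagonal, ← diagonal_one]
    congr 1
    ext v
    rcases Fin.exists_fin_two.mp ⟨c v, rfl⟩ with h | h <;> simp [σ, h]
  have hconj : diagonal (σ ∘ c) * G.adjMatrix R * diagonal (σ ∘ c) = -G.adjMatrix R := by
    ext u v
    rw [mul_diagonal, diagonal_mul]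
    by_cases huv : G.Adj u v
    · have hc := c.valid huv
      rcases Fin.exists_fin_two.mp ⟨c u, rfl⟩ with h | h <;>
        rcases Fin.exists_fin_two.mp ⟨c v, rfl⟩ with h' | h' <;> simp_all [σ]
    · simp [huv]
  rw [← hconj, charpoly_mul_comm, ← mul_assoc, hsq, one_mul]

theorem Reachable.mem_of_forall_adj_mem {s : Set V} (hs : ∀ ⦃a b⦄, a ∈ s → G.Adj a b → b ∈ s)
    {u v : V} (h : G.Reachable u v) (hu : u ∈ s) : v ∈ s := by
  obtain ⟨p⟩ := h
  induction p with
  | nil => exact hu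
  | cons hadj _ ih => exact ih (hs hu hadj)

theorem induce_pair_eq_top {v w : V} (hvw : G.Adj v w) : G.induce {v, w} = ⊤ := by
  ext ⟨a, ha⟩ ⟨b, hb⟩
  simp only [comap_adj, Function.Embedding.subtype_apply, top_adj, ne_eq, Subtype.mk.injEq]
  rcases ha with rfl | rfl <;> rcases hb with rfl | rfl <;>
    simp [hvw, hvw.symm, hvw.ne, hvw.ne.symm]

theorem nonempty_induce_pair_iso_top {v w : V} (hvw : G.Adj v w) :
    Nonempty (G.induce {v, w} ≃g (⊤ : SimpleGraph (Fin 2))) := by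
  have e := Finite.equivFinOfCardEq <| (Nat.card_coe_set_eq _).trans (Set.ncard_pair hvw.ne)
  exact ⟨induce_pair_eq_top hvw ▸ Iso.completeGraph e⟩

variable [Fintype V] [DecidableRel G.Adj]

theorem nonempty_of_minDegree_pos (h : 0 < G.minDegree) : Nonempty V := by
  by_contra hV
  rw [not_nonempty_iff] at hV
  rw [minDegree_of_subsingleton] at h
  exact h.false

theorem supp_connectedComponentMk_eq_pair {v w : V} (hvw : G.Adj v w) (hv : G.degree v = 1)
    (hw : G.degree w = 1) : (G.connectedComponentMk v).supp = {v, w} := by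
  obtain ⟨w', -, hv⟩ := degree_eq_one_iff_existsUnique_adj.mp hv
  obtain ⟨v', -, hw⟩ := degree_eq_one_iff_existsUnique_adj.mp hw
  have hclosed : ∀ ⦃a b⦄, a ∈ ({v, w} : Set V) → G.Adj a b → b ∈ ({v, w} : Set V) := by
    rintro a b (ha | ha) hab <;> rw [ha] at hab
    · exact .inr ((hv b hab).trans (hv w hvw).symm)
    · exact .inl ((hw b hab).trans (hw v hvw.symm).symm)
  ext x
  refine ⟨fun hx => (ConnectedComponent.exact hx).symm.mem_of_forall_adj_mem hclosed (.inl rfl),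
    ?_⟩
  rintro (rfl | rfl)
  · exact ConnectedComponent.connectedComponentMk_mem
  · exact (ConnectedComponent.mem_supp_congr_adj _ hvw).mp
      ConnectedComponent.connectedComponentMk_mem

theorem one_le_adjMatrix_mul_self_apply {R : Type*} [Semiring R] [PartialOrder R]
    [IsOrderedRing R] {u w v : V} (huw : G.Adj u w) (hwv : G.Adj w v) :
    1 ≤ (G.adjMatrix R * G.adjMatrix R) u v := by
  rw [adjMatrix_mul_apply]
  calc (1 : R) = G.adjMatrix R w v := by simp [hwv]
    _ ≤ ∑ x ∈ G.neighborFinset u, G.adjMatrix R x v :=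
      Finset.single_le_sum (f := fun x => G.adjMatrix R x v)
        (fun x _ => by rw [adjMatrix_apply]; split_ifs <;> simp)
        ((mem_neighborFinset _ _ _).mpr huw)

theorem exists_adj_ne_of_one_lt_degree {w : V} (hw : 1 < G.degree w) (v : V) :
    ∃ u, G.Adj w u ∧ u ≠ v := by
  obtain ⟨u, hu, huv⟩ := Finset.exists_mem_ne (s := G.neighborFinset w) hw v
  exact ⟨u, (mem_neighborFinset _ _ _).mp hu, huv⟩

theorem exists_adj_adj_ne_of_two_le_minDegree (h : 2 ≤ G.minDegree) :
    ∃ v w u, G.degree v = G.minDegree ∧ G.Adj v w ∧ G.Adj w u ∧ u ≠ v := by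
  have := nonempty_of_minDegree_pos (G := G) (by omega)
  obtain ⟨v, hv⟩ := G.exists_minimal_degree_vertex
  obtain ⟨w, hvw⟩ := (G.degree_pos_iff_exists_adj v).mp (by omega)
  obtain ⟨u, hwu, huv⟩ := exists_adj_ne_of_one_lt_degree ((G.minDegree_le_degree w).trans_lt' h) v
  exact ⟨v, w, u, hv.symm, hvw, hwu, huv⟩

theorem exists_adj_adj_ne_of_minDegree_induce_supp_eq_one (c : G.ConnectedComponent)
    [Fintype c.supp] [DecidableRel (G.induce c.supp).Adj] (hc : (G.induce c.supp).minDegree = 1)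
    (hK : ¬ Nonempty (G.induce c.supp ≃g (⊤ : SimpleGraph (Fin 2)))) :
    ∃ v w u, G.degree v = 1 ∧ G.Adj v w ∧ G.Adj w u ∧ u ≠ v := by
  have : Nonempty c.supp := c.nonempty_supp.to_subtype
  obtain ⟨⟨v, hv⟩, hdeg⟩ := (G.induce c.supp).exists_minimal_degree_vertex
  have hdegv : G.degree v = 1 := by
    classical
    rw [← hc, hdeg, ← degree_induce_of_neighborSet_subset (v := ⟨v, hv⟩)
      fun _ => c.mem_supp_of_adj_mem_supp hv]
    congr!
  obtain ⟨w, hvw, -⟩ := degree_eq_one_iff_existsUnique_adj.mp hdegv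
  by_cases hw : G.degree w = 1
  · obtain rfl : G.connectedComponentMk v = c := hv
    rw [supp_connectedComponentMk_eq_pair hvw hdegv hw] at hK
    exact absurd (nonempty_induce_pair_iso_top hvw) hK
  · have := hvw.degree_pos_right
    obtain ⟨u, hwu, huv⟩ := exists_adj_ne_of_one_lt_degree (show 1 < G.degree w by omega) v
    exact ⟨v, w, u, hdegv, hvw, hwu, huv⟩

end SimpleGraph

section HLIndex

open SimpleGraph

theorem hlIndex_nonneg {V : Type*} [Fintype V] (G : SimpleGraph V) : 0 ≤ hlIndex G :=
  (abs_nonneg _).trans (le_max_left _ _)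

variable {V : Type*} [Fintype V] [DecidableEq V] {G : SimpleGraph V} [DecidableRel G.Adj]

theorem hlIndex_le_abs_of_mem_roots (hG : G.Colorable 2) {x : ℝ}
    (hx : x ∈ (G.adjMatrix ℝ).charpoly.roots) : hlIndex G ≤ |x| := by
  set m := (G.adjMatrix ℝ).charpoly.roots
  have hsymm : m.map Neg.neg = m := by
    rw [← roots_charpoly_neg, charpoly_neg_adjMatrix hG]
  have hcard : Multiset.card m = Fintype.card V := by
    simp [m, (G.isHermitian_adjMatrix ℝ).roots_charpoly_eq_eigenvalues]
  have h := List.max_abs_getD_middle_le_abs (Multiset.pairwise_sort m _).sortedLE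
    (Multiset.sort_eq_reverse_map_neg hsymm) ((Multiset.mem_sort _).mpr hx)
  rw [Multiset.length_sort, hcard] at h
  -- `hlIndex` is built from classical decidability instances; `convert` identifies them with ours.
  unfold hlIndex
  convert h

theorem posSemidef_adjMatrix_mul_self_sub_smul_one (hG : G.Colorable 2) {c : ℝ}
    (hc : c ≤ hlIndex G ^ 2) : (G.adjMatrix ℝ * G.adjMatrix ℝ - c • 1).PosSemidef := by
  have hA := G.isHermitian_adjMatrix ℝ
  refine hA.posSemidef_mul_self_sub_smul_one fun i => hc.trans ?_
  have hi : hA.eigenvalues i ∈ (G.adjMatrix ℝ).charpoly.roots := by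
    rw [hA.roots_charpoly_eq_eigenvalues]
    exact Multiset.mem_map_of_mem _ (Finset.mem_univ i)
  simpa only [sq_abs] using
    pow_le_pow_left₀ (hlIndex_nonneg G) (hlIndex_le_abs_of_mem_roots hG hi) 2

theorem adjMatrix_mul_self_sub_smul_one_apply_self (c : ℝ) (v : V) :
    (G.adjMatrix ℝ * G.adjMatrix ℝ - c • 1) v v = G.degree v - c := by
  rw [Matrix.sub_apply, Matrix.smul_apply, one_apply_eq, adjMatrix_mul_self_apply_self,
    smul_eq_mul, mul_one]

theorem sq_hlIndex_le_degree (hG : G.Colorable 2) (v : V) : hlIndex G ^ 2 ≤ G.degree v := by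
  have := (posSemidef_adjMatrix_mul_self_sub_smul_one hG le_rfl).diag_nonneg (i := v)
  rw [adjMatrix_mul_self_sub_smul_one_apply_self] at this
  linarith

theorem sq_hlIndex_lt_degree_of_adj_of_adj (hG : G.Colorable 2) {v w u : V} (hvw : G.Adj v w)
    (hwu : G.Adj w u) (huv : u ≠ v) : hlIndex G ^ 2 < G.degree v := by
  by_contra! h
  have hvv : (G.adjMatrix ℝ * G.adjMatrix ℝ - (G.degree v : ℝ) • 1) v v = 0 := by
    rw [adjMatrix_mul_self_sub_smul_one_apply_self, sub_self]
  have hzero :=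
    (posSemidef_adjMatrix_mul_self_sub_smul_one hG h).apply_eq_zero_of_apply_self_eq_zero hvv u
  rw [Matrix.sub_apply, Matrix.smul_apply, one_apply_ne huv, smul_zero, sub_zero] at hzero
  have := one_le_adjMatrix_mul_self_apply (R := ℝ) hwu.symm hvw.symm
  linarith

end HLIndex

/-- Let `G` be a bipartite finite simple graph with minimum degree `δ ≥ 1`. Then
`R(G) ≤ √δ`. Moreover, if `δ ≥ 2`, or if `δ = 1` and `G` has a connected component of
minimum degree `1` that is not isomorphic to the complete graph `K₂`, then `R(G) < √δ`. -/
theorem bipartite_HL_index_le_sqrt_minDegree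
    {V : Type} [Fintype V] [DecidableEq V] (G : SimpleGraph V) [DecidableRel G.Adj]
    (hbip : G.Colorable 2) (hδ : 1 ≤ G.minDegree) :
    hlIndex G ≤ Real.sqrt (G.minDegree : ℝ) ∧
      ((2 ≤ G.minDegree ∨
          (G.minDegree = 1 ∧
            ∃ c : G.ConnectedComponent,
              (letI : Fintype ↥c.supp := Fintype.ofFinite _
               letI : DecidableRel (G.induce c.supp).Adj := Classical.decRel _
               (G.induce c.supp).minDegree = 1) ∧
              ¬ Nonempty (G.induce c.supp ≃g (⊤ : SimpleGraph (Fin 2))))) →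
        hlIndex G < Real.sqrt (G.minDegree : ℝ)) := by
  refine ⟨?_, fun hcase => ?_⟩
  · have := G.nonempty_of_minDegree_pos hδ
    obtain ⟨v, hv⟩ := G.exists_minimal_degree_vertex
    rw [Real.le_sqrt (hlIndex_nonneg G) (Nat.cast_nonneg _), hv]
    exact sq_hlIndex_le_degree hbip v
  · obtain ⟨v, w, u, hv, hvw, hwu, huv⟩ :
        ∃ v w u, G.degree v = G.minDegree ∧ G.Adj v w ∧ G.Adj w u ∧ u ≠ v := by
      rcases hcase with h2 | ⟨h1, c, hc, hK⟩
      · exact G.exists_adj_adj_ne_of_two_le_minDegree h2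
      · let _ : Fintype c.supp := Fintype.ofFinite _
        let _ : DecidableRel (G.induce c.supp).Adj := Classical.decRel _
        rw [h1]
        exact G.exists_adj_adj_ne_of_minDegree_induce_supp_eq_one c hc hK
    rw [Real.lt_sqrt (hlIndex_nonneg G), ← hv]
    exact sq_hlIndex_lt_degree_of_adj_of_adj hbip hvw hwu huv
end

section
/- Let R be a commutative ring, let t and n be positive integers, and for i, j ∈ {1, …, n} let B_{ij} be t×t matrices over R that pairwise commute. Then the determinant of the nt×nt block matrix with (i,j) block B_{ij} equals det( Σ_{σ ∈ S_n} sign(σ) B_{1σ(1)} B_{2σ(2)} ⋯ B_{nσ(n)} ), where S_n denotes the set of all permutations of {1, …, n}. -/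
open Matrix Polynomial

namespace KSW

variable {R : Type*} [CommRing R] {t : ℕ}

/-- The ring hom assembling a matrix of blocks (given via a ring hom `φ` from a scalar ring `S`)
into one big matrix. -/
def bigHom {n : ℕ} {S : Type*} [Ring S] (φ : S →+* Matrix (Fin t) (Fin t) R) :
    Matrix (Fin n) (Fin n) S →+* Matrix (Fin n × Fin t) (Fin n × Fin t) R :=
  ((Matrix.compRingEquiv (Fin n) (Fin t) R).toRingHom).comp φ.mapMatrix

lemma bigHom_apply {n : ℕ} {S : Type*} [Ring S] (φ : S →+* Matrix (Fin t) (Fin t) R)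
    (N : Matrix (Fin n) (Fin n) S) (i j : Fin n) (k l : Fin t) :
    bigHom φ N (i, k) (j, l) = φ (N i j) k l := rfl

lemma bigHom_eq_comp {n : ℕ} {S : Type*} [Ring S] (φ : S →+* Matrix (Fin t) (Fin t) R)
    (N : Matrix (Fin n) (Fin n) S) :
    bigHom φ N = Matrix.comp (Fin n) (Fin n) (Fin t) (Fin t) R (N.map φ) := rfl

/-- Splitting off the first block of indices. -/
def splitEquiv (n t : ℕ) : (Fin (n + 1) × Fin t) ≃ (Fin t ⊕ Fin n × Fin t) where
  toFun x := if h : x.1 = 0 then Sum.inl x.2 else Sum.inr (x.1.pred h, x.2)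
  invFun y := Sum.elim (fun k => (0, k)) (fun p => (p.1.succ, p.2)) y
  left_inv x := by
    rcases x with ⟨i, k⟩
    by_cases h : i = 0 <;> simp [h]
  right_inv y := by
    rcases y with k | ⟨i, k⟩ <;> simp [Fin.succ_ne_zero]

lemma det_comp_col {n : ℕ} (G : Matrix (Fin (n + 1)) (Fin (n + 1)) (Matrix (Fin t) (Fin t) R))
    (hG : ∀ i, i ≠ 0 → G i 0 = 0) :
    (Matrix.comp (Fin (n + 1)) (Fin (n + 1)) (Fin t) (Fin t) R G).det
      = (G 0 0).det *
        (Matrix.comp (Fin n) (Fin n) (Fin t) (Fin t) R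
          (Matrix.of fun i j : Fin n => G i.succ j.succ)).det := by
  have key : (Matrix.comp (Fin (n + 1)) (Fin (n + 1)) (Fin t) (Fin t) R G).submatrix
        (splitEquiv n t).symm (splitEquiv n t).symm
      = Matrix.fromBlocks (G 0 0)
          (Matrix.of fun k (p : Fin n × Fin t) => G 0 p.1.succ k p.2)
          0
          (Matrix.comp (Fin n) (Fin n) (Fin t) (Fin t) R
            (Matrix.of fun i j : Fin n => G i.succ j.succ)) := by
    ext x y
    rcases x with k | ⟨i, k⟩ <;> rcases y with l | ⟨j, l⟩ <;>
      simp [splitEquiv, Matrix.fromBlocks, hG _ (Fin.succ_ne_zero _)]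
  rw [← Matrix.det_submatrix_equiv_self (splitEquiv n t).symm, key,
    Matrix.det_fromBlocks_zero₂₁]

lemma det_comp_row {n : ℕ} (G : Matrix (Fin (n + 1)) (Fin (n + 1)) (Matrix (Fin t) (Fin t) R))
    (hG : ∀ j, j ≠ 0 → G 0 j = 0) :
    (Matrix.comp (Fin (n + 1)) (Fin (n + 1)) (Fin t) (Fin t) R G).det
      = (G 0 0).det *
        (Matrix.comp (Fin n) (Fin n) (Fin t) (Fin t) R
          (Matrix.of fun i j : Fin n => G i.succ j.succ)).det := by
  have h1 : (Matrix.comp (Fin (n + 1)) (Fin (n + 1)) (Fin t) (Fin t) R G)ᵀ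
      = Matrix.comp (Fin (n + 1)) (Fin (n + 1)) (Fin t) (Fin t) R
          (Matrix.of fun i j => (G j i)ᵀ) := by
    ext ⟨i, k⟩ ⟨j, l⟩; rfl
  have h2 : (Matrix.comp (Fin n) (Fin n) (Fin t) (Fin t) R
        (Matrix.of fun i j : Fin n => G i.succ j.succ))ᵀ
      = Matrix.comp (Fin n) (Fin n) (Fin t) (Fin t) R
          (Matrix.of fun i j : Fin n => (G j.succ i.succ)ᵀ) := by
    ext ⟨i, k⟩ ⟨j, l⟩; rfl
  rw [← Matrix.det_transpose (Matrix.comp (Fin (n + 1)) (Fin (n + 1)) (Fin t) (Fin t) R G), h1,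
    det_comp_col _ (fun i hi => by
      show (G 0 i)ᵀ = 0
      rw [hG i hi, Matrix.transpose_zero]),
    ← Matrix.det_transpose (G 0 0)]
  congr 1
  rw [← Matrix.det_transpose
      (Matrix.comp (Fin n) (Fin n) (Fin t) (Fin t) R
        (Matrix.of fun i j : Fin n => G i.succ j.succ)), h2]
  rfl

lemma det_comp_diag {n : ℕ} (A : Matrix (Fin t) (Fin t) R) :
    (Matrix.comp (Fin n) (Fin n) (Fin t) (Fin t) R
      (Matrix.of fun i j : Fin n => if i = j then A else 0)).det = A.det ^ n := by
  induction n with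
  | zero =>
    rw [Matrix.det_isEmpty, pow_zero]
  | succ n ih =>
    rw [det_comp_col _ (fun i hi => by simp [hi]), pow_succ]
    have : (Matrix.of fun i j : Fin n =>
        (Matrix.of fun i j : Fin (n + 1) => if i = j then A else 0) i.succ j.succ)
        = Matrix.of fun i j : Fin n => if i = j then A else 0 := by
      ext i j k l
      simp [Fin.succ_inj]
    rw [this, ih]
    simp [mul_comm]

universe u v

theorem det_bigHom : ∀ (n : ℕ) {S : Type u} {R' : Type v} [CommRing S] [CommRing R']
    (φ : S →+* Matrix (Fin t) (Fin t) R') (N : Matrix (Fin n) (Fin n) S),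
    (bigHom φ N).det = (φ N.det).det := by
  intro n
  induction n with
  | zero =>
    intro S R' _ _ φ N
    rw [Matrix.det_isEmpty, Matrix.det_fin_zero, _root_.map_one, Matrix.det_one]
  | succ n ih =>
    intro S R' _ _ φ N
    classical
    -- regularized matrix over S[X]
    set Nh : Matrix (Fin (n + 1)) (Fin (n + 1)) (Polynomial S) :=
      Matrix.of fun i j => Polynomial.C (N i j) + if i = 0 ∧ j = 0 then Polynomial.X else 0
      with hNh
    set a : Polynomial S := Nh 0 0 with ha
    set L : Matrix (Fin (n + 1)) (Fin (n + 1)) (Polynomial S) :=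
      Matrix.of fun i j => if i = 0 then (if j = 0 then 1 else 0)
        else if j = 0 then -(Nh i 0) else if i = j then a else 0 with hL
    set φh : Polynomial S →+* Matrix (Fin t) (Fin t) (Polynomial R') :=
      Polynomial.eval₂RingHom' ((Polynomial.C (R := R')).mapMatrix.comp φ)
        (Matrix.scalar (Fin t) Polynomial.X)
        (fun s => (Matrix.scalar_commute _ (fun r' => Commute.all _ _) _).symm) with hφh
    have hφhC : ∀ s : S, φh (Polynomial.C s) = (φ s).map Polynomial.C := by
      intro s
      simp [hφh, Polynomial.eval₂RingHom', Polynomial.eval₂_C, RingHom.mapMatrix_apply]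
    have hφhX : φh Polynomial.X = Matrix.scalar (Fin t) Polynomial.X := by
      simp [hφh, Polynomial.eval₂RingHom', Polynomial.eval₂_X]
    set P : Matrix (Fin (n + 1)) (Fin (n + 1)) (Polynomial S) := L * Nh with hP
    set C' : Matrix (Fin n) (Fin n) (Polynomial S) :=
      Matrix.of fun i j : Fin n => P i.succ j.succ with hC'
    -- entries of P
    have hP0 : ∀ j, P 0 j = Nh 0 j := by
      intro j
      rw [hP, Matrix.mul_apply]
      rw [Finset.sum_eq_single 0]
      · simp [hL]
      · intro b _ hb
        simp [hL, hb]
      · simp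
    have hPi : ∀ i j, i ≠ 0 → P i j = a * Nh i j - Nh i 0 * Nh 0 j := by
      intro i j hi
      rw [hP, Matrix.mul_apply]
      have : ∀ k, L i k * Nh k j
          = (if k = 0 then -(Nh i 0) * Nh 0 j else 0) + (if k = i then a * Nh i j else 0) := by
        intro k
        by_cases h0 : k = 0
        · subst h0
          simp [hL, hi, Ne.symm hi]
        · by_cases hk : k = i
          · subst hk
            simp [hL, hi, h0]
          · simp [hL, hi, h0, Ne.symm hk, hk]
      rw [Finset.sum_congr rfl fun k _ => this k, Finset.sum_add_distrib,
        Finset.sum_ite_eq' Finset.univ 0, Finset.sum_ite_eq' Finset.univ i]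
      simp
      ring
    have hPi0 : ∀ i, i ≠ 0 → P i 0 = 0 := by
      intro i hi
      rw [hPi i 0 hi, ← ha, mul_comm, sub_self]
    -- scalar determinant identities over S[X]
    have hdetL : L.det = a ^ n := by
      have htri : L.BlockTriangular OrderDual.toDual := by
        intro i j hij
        have hij' : i < j := hij
        have hj : j ≠ 0 := by
          intro h; subst h; exact absurd hij' (by simp)
        by_cases h0 : i = 0
        · simp [hL, h0, hj]
        · simp [hL, h0, hj, ne_of_lt hij']
      rw [Matrix.det_of_lowerTriangular L htri, Fin.prod_univ_succ]
      have h00 : L 0 0 = 1 := by simp [hL]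
      have hsucc : ∀ i : Fin n, L i.succ i.succ = a := by
        intro i; simp [hL, Fin.succ_ne_zero]
      rw [h00, one_mul, Finset.prod_congr rfl fun i _ => hsucc i]
      simp
    have hdetP : P.det = a * C'.det := by
      rw [Matrix.det_succ_column_zero, Finset.sum_eq_single 0]
      · rw [hP0 0, ← ha]
        have : P.submatrix (Fin.succAbove 0) Fin.succ = C' := by
          ext i j
          simp [hC', Fin.succAbove_zero]
        rw [this]
        simp
      · intro b _ hb
        rw [hPi0 b hb]
        ring
      · simp
    have hscalar : a * C'.det = a ^ n * Nh.det := by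
      rw [← hdetP, hP, Matrix.det_mul, hdetL]
    -- big determinant identities over R'[X]
    have hbigL : (bigHom φh L).det = (φh a).det ^ n := by
      rw [bigHom_eq_comp,
        det_comp_row (L.map φh) (fun j hj => by
          show φh (L 0 j) = 0
          have : L 0 j = 0 := by simp [hL, hj]
          rw [this, map_zero])]
      have h00 : (L.map φh) 0 0 = 1 := by
        show φh (L 0 0) = 1
        have : L 0 0 = 1 := by simp [hL]
        rw [this, _root_.map_one]
      have hinner : (Matrix.of fun i j : Fin n => (L.map φh) i.succ j.succ)
          = Matrix.of fun i j : Fin n => if i = j then φh a else 0 := Matrix.ext fun i j => by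
        show φh (L i.succ j.succ) = (if i = j then φh a else 0)
        have h1 : L i.succ j.succ = if i = j then a else 0 := by
          simp [hL, Fin.succ_ne_zero, Fin.succ_inj]
        rw [h1, apply_ite φh, map_zero]
      rw [h00, Matrix.det_one, one_mul, hinner, det_comp_diag]
    have hbigP : (bigHom φh P).det = (φh a).det * (φh C'.det).det := by
      rw [bigHom_eq_comp,
        det_comp_col (P.map φh) (fun i hi => by
          show φh (P i 0) = 0
          rw [hPi0 i hi, map_zero])]
      have h00 : (P.map φh) 0 0 = φh a := by
        show φh (P 0 0) = φh a
        rw [hP0 0, ← ha]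
      have hinner : (Matrix.of fun i j : Fin n => (P.map φh) i.succ j.succ) = C'.map φh :=
        Matrix.ext fun i j => rfl
      rw [h00, hinner, ← bigHom_eq_comp, ih φh C']
    have hmul : (bigHom φh P).det = (φh a).det ^ n * (bigHom φh Nh).det := by
      rw [hP, _root_.map_mul, Matrix.det_mul, hbigL]
    -- determinant of φh a is monic
    have hmonic : (φh a).det.Monic := by
      have : φh a = charmatrix (-(φ (N 0 0))) := by
        have ha' : a = Polynomial.C (N 0 0) + Polynomial.X := by simp [ha, hNh]
        rw [ha', map_add, hφhC, hφhX]
        unfold charmatrix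
        rw [map_neg, sub_neg_eq_add, add_comm]
        rfl
      rw [this]
      exact Matrix.charpoly_monic _
    have hreg : IsLeftRegular ((φh a).det ^ n) := (hmonic.pow n).isRegular.left
    -- combine to get the identity over R'[X]
    have key : (bigHom φh Nh).det = (φh Nh.det).det := by
      apply hreg
      show (φh a).det ^ n * (bigHom φh Nh).det = (φh a).det ^ n * (φh Nh.det).det
      rw [← hmul, hbigP]
      have := congrArg (fun s => (φh s).det) hscalar
      simp only [_root_.map_mul, Matrix.det_mul, _root_.map_pow, Matrix.det_pow] at this
      rw [← this]
    -- evaluate at X = 0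
    set ε : Polynomial R' →+* R' := Polynomial.evalRingHom 0 with hε
    set εS : Polynomial S →+* S := Polynomial.evalRingHom 0 with hεS
    have hκ : ε.mapMatrix.comp φh = φ.comp εS := by
      apply Polynomial.ringHom_ext
      · intro s
        ext k l
        simp [hφhC, hε, hεS]
      · ext k l
        simp [hφhX, hε, hεS, Matrix.scalar_apply, Matrix.diagonal_apply]
        split <;> simp
    have hNev : Nh.map εS = N := by
      ext i j
      by_cases h : i = 0 ∧ j = 0 <;> simp [hNh, hεS, h]
    have hLHS : (bigHom φh Nh).map ε = bigHom φ N := by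
      ext ⟨i, k⟩ ⟨j, l⟩
      show ε (φh (Nh i j) k l) = φ (N i j) k l
      have := congrArg (fun f : Polynomial S →+* Matrix (Fin t) (Fin t) R' => f (Nh i j)) hκ
      simp only [RingHom.comp_apply, RingHom.mapMatrix_apply] at this
      calc ε (φh (Nh i j) k l) = ((φh (Nh i j)).map ε) k l := rfl
        _ = (φ (εS (Nh i j))) k l := by rw [this]
        _ = φ (N i j) k l := by rw [show εS (Nh i j) = N i j from congrFun (congrFun hNev i) j]
    have := congrArg ε key
    rw [ε.map_det, ε.map_det, RingHom.mapMatrix_apply, RingHom.mapMatrix_apply, hLHS] at this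
    rw [this]
    congr 1
    have h2 := congrArg (fun f : Polynomial S →+* Matrix (Fin t) (Fin t) R' => f Nh.det) hκ
    simp only [RingHom.comp_apply, RingHom.mapMatrix_apply] at h2
    rw [h2, εS.map_det, RingHom.mapMatrix_apply, hNev]

end KSW

/-- (Kovacs–Silver–Williams) Let `R` be a commutative ring and let `B i j` (`i j : Fin n`) be
pairwise commuting `t × t` matrices over `R`. Then the determinant of the `nt × nt` block
matrix with `(i,j)` block `B i j` equals
`det (Σ_{σ ∈ S_n} sign σ • B 1 (σ 1) * B 2 (σ 2) * ⋯ * B n (σ n))`. -/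
theorem det_blockMatrix_commuting_blocks
    (R : Type*) [CommRing R] (n t : ℕ) (hn : 1 ≤ n) (ht : 1 ≤ t)
    (B : Fin n → Fin n → Matrix (Fin t) (Fin t) R)
    (hcomm : ∀ i j k l, Commute (B i j) (B k l))
    (M : Matrix (Fin n × Fin t) (Fin n × Fin t) R)
    (hM : ∀ i k j l, M (i, k) (j, l) = B i j k l) :
    M.det =
      (∑ σ : Equiv.Perm (Fin n),
        (Equiv.Perm.sign σ : ℤ) • ((List.finRange n).map fun i => B i (σ i)).prod).det := by
  classical
  set s : Set (Matrix (Fin t) (Fin t) R) := {x | ∃ i j, B i j = x} with hs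
  have hscomm : ∀ x ∈ s, ∀ y ∈ s, x * y = y * x := by
    rintro x ⟨i, j, rfl⟩ y ⟨k, l, rfl⟩
    exact hcomm i j k l
  letI : CommRing (Subring.closure s) := Subring.closureCommRingOfComm hscomm
  set φ : Subring.closure s →+* Matrix (Fin t) (Fin t) R := (Subring.closure s).subtype with hφ
  set N : Matrix (Fin n) (Fin n) (Subring.closure s) :=
    Matrix.of fun i j => ⟨B i j, Subring.subset_closure ⟨i, j, rfl⟩⟩ with hN
  have hMeq : M = KSW.bigHom φ N := by
    ext ⟨i, k⟩ ⟨j, l⟩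
    rw [hM, KSW.bigHom_apply]
    rfl
  have hRHS : (∑ σ : Equiv.Perm (Fin n),
      (Equiv.Perm.sign σ : ℤ) • ((List.finRange n).map fun i => B i (σ i)).prod) = φ N.det := by
    rw [← Matrix.det_transpose N, Matrix.det_apply, map_sum]
    refine Finset.sum_congr rfl fun σ _ => ?_
    rw [Units.smul_def, map_zsmul]
    congr 1
    rw [show (∏ i, Nᵀ (σ i) i) = ∏ i, N i (σ i) from Finset.prod_congr rfl fun i _ => rfl,
      Fin.prod_univ_def, map_list_prod, List.map_map]
    rfl
  rw [hMeq, KSW.det_bigHom, hRHS]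
end

section
/- For every real number q ≥ 2, the polynomial p(λ) = λ³ + (1−q)λ² − 3qλ + q² − q satisfies p(√(q−1) − 1) = 2 and p(√q − 1) = √q − q < 0; consequently p has a real root λ₀ with √(q−1) − 1 < λ₀ < √q − 1. -/
/-- For every real `q ≥ 2`, the cubic `p(λ) = λ³ + (1-q)λ² - 3qλ + q² - q` satisfies
`p(√(q-1) - 1) = 2` and `p(√q - 1) = √q - q < 0`; consequently `p` has a real root `λ₀`
with `√(q-1) - 1 < λ₀ < √q - 1`. -/
theorem cubic_has_root_between (q : ℝ) (hq : 2 ≤ q) :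
    let p : ℝ → ℝ := fun x => x ^ 3 + (1 - q) * x ^ 2 - 3 * q * x + q ^ 2 - q
    p (Real.sqrt (q - 1) - 1) = 2 ∧
    p (Real.sqrt q - 1) = Real.sqrt q - q ∧
    Real.sqrt q - q < 0 ∧
    ∃ lam₀ : ℝ, Real.sqrt (q - 1) - 1 < lam₀ ∧ lam₀ < Real.sqrt q - 1 ∧ p lam₀ = 0 := by
  intro p
  have hq1 : (0:ℝ) ≤ q - 1 := by linarith
  have hq0 : (0:ℝ) ≤ q := by linarith
  have hs : Real.sqrt (q - 1) ^ 2 = q - 1 := Real.sq_sqrt hq1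
  have ht : Real.sqrt q ^ 2 = q := Real.sq_sqrt hq0
  have h1 : p (Real.sqrt (q - 1) - 1) = 2 := by
    simp only [p]; nlinarith [hs, Real.sqrt_nonneg (q-1)]
  have h2 : p (Real.sqrt q - 1) = Real.sqrt q - q := by
    simp only [p]; nlinarith [ht, Real.sqrt_nonneg q]
  have h3 : Real.sqrt q - q < 0 := by
    have : Real.sqrt q < q := by
      nlinarith [ht, Real.sqrt_nonneg q]
    linarith
  refine ⟨h1, h2, h3, ?_⟩
  have hab : Real.sqrt (q - 1) - 1 < Real.sqrt q - 1 := by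
    have := Real.sqrt_lt_sqrt hq1 (by linarith : q - 1 < q)
    linarith
  have hcont : ContinuousOn p (Set.Icc (Real.sqrt (q - 1) - 1) (Real.sqrt q - 1)) := by
    apply Continuous.continuousOn; simp only [p]; continuity
  have := intermediate_value_Ioo' (le_of_lt hab) hcont
  have h0 : (0:ℝ) ∈ Set.Ioo (p (Real.sqrt q - 1)) (p (Real.sqrt (q - 1) - 1)) := by
    rw [h1, h2]; exact ⟨h3, by norm_num⟩
  obtain ⟨lam₀, hmem, hval⟩ := this h0
  exact ⟨lam₀, hmem.1, hmem.2, hval⟩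
end

section
/- For every real t ≥ 1, the polynomial p_t(λ) = λ³ + (1 − t²)λ² − 3t²λ + t⁴ − t² satisfies p_t(t − 1 − 1/(2t)) > 0. Moreover, for every real h > 2 there exists T such that for all real t ≥ T one has p_t(t − 1 − 1/(ht)) < 0; consequently, for every h > 2 and all sufficiently large t, the polynomial p_t has a real root λ₀ with t − 1 − 1/(2t) < λ₀ < t − 1 − 1/(ht). -/
lemma pos_at (t : ℝ) (ht : 1 ≤ t) :
    0 < (t - 1 - 1 / (2 * t)) ^ 3 + (1 - t ^ 2) * (t - 1 - 1 / (2 * t)) ^ 2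
      - 3 * t ^ 2 * (t - 1 - 1 / (2 * t)) + t ^ 4 - t ^ 2 := by
  have ht0 : (0:ℝ) < t := by linarith
  have key : (t - 1 - 1 / (2 * t)) ^ 3 + (1 - t ^ 2) * (t - 1 - 1 / (2 * t)) ^ 2
      - 3 * t ^ 2 * (t - 1 - 1 / (2 * t)) + t ^ 4 - t ^ 2
      = ((7/4) * t ^ 3 + (1/4) * t ^ 2 - (1/2) * t - 1/8) / t ^ 3 := by
    field_simp
    ring
  rw [key]
  apply div_pos _ (by positivity)
  nlinarith [pow_le_pow_left₀ (by norm_num : (0:ℝ) ≤ 1) ht 3, sq_nonneg t]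

lemma neg_at (h t : ℝ) (hh : 2 < h) (hT : 2 + 14 / (h - 2) ≤ t) :
    (t - 1 - 1 / (h * t)) ^ 3 + (1 - t ^ 2) * (t - 1 - 1 / (h * t)) ^ 2
      - 3 * t ^ 2 * (t - 1 - 1 / (h * t)) + t ^ 4 - t ^ 2 < 0 := by
  have hc : (0:ℝ) < h - 2 := by linarith
  have ht2 : (2:ℝ) ≤ t := by
    have : 0 ≤ 14 / (h - 2) := by positivity
    linarith
  have ht0 : (0:ℝ) < t := by linarith
  have hh0 : (0:ℝ) < h := by linarith
  have hct : 14 ≤ (h - 2) * t := by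
    have h1 : 14 / (h - 2) ≤ t := by linarith
    calc (14:ℝ) = (14 / (h - 2)) * (h - 2) := by field_simp
    _ ≤ t * (h - 2) := by nlinarith
    _ = (h - 2) * t := by ring
  have key : (t - 1 - 1 / (h * t)) ^ 3 + (1 - t ^ 2) * (t - 1 - 1 / (h * t)) ^ 2
      - 3 * t ^ 2 * (t - 1 - 1 / (h * t)) + t ^ 4 - t ^ 2
      = ((2*h^2 - h^3) * t^5 + (h^3 - 2*h^2) * t^4 + (4*h^2 - h) * t^3
          + (3*h - h^2) * t^2 - 2*h*t - 1) / (h^3 * t^3) := by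
    field_simp
    ring
  rw [key]
  apply div_neg_of_neg_of_pos _ (by positivity)
  nlinarith [mul_pos (mul_pos (mul_pos hh0 hh0) (mul_pos ht0 ht0)) (mul_pos ht0 ht0),
    mul_pos hh0 ht0, sq_nonneg (h*t), mul_pos (mul_pos hh0 hh0) (mul_pos (mul_pos ht0 ht0) ht0),
    mul_le_mul_of_nonneg_left hct (le_of_lt (mul_pos (mul_pos hh0 hh0) (mul_pos (mul_pos ht0 ht0) (mul_pos ht0 ht0)))),
    mul_le_mul_of_nonneg_left ht2 (le_of_lt (mul_pos hh0 hh0))]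

/-- For real `t ≥ 1`, the cubic `p_t(λ) = λ³ + (1-t²)λ² - 3t²λ + t⁴ - t²` is positive at
`t - 1 - 1/(2t)`; and for every `h > 2` it is negative at `t - 1 - 1/(ht)` for all
sufficiently large `t`; consequently, for every `h > 2` and all sufficiently large `t`,
`p_t` has a real root `λ₀` with `t - 1 - 1/(2t) < λ₀ < t - 1 - 1/(ht)`. -/
theorem cubic_root_location_refined :
    let p : ℝ → ℝ → ℝ := fun t x =>
      x ^ 3 + (1 - t ^ 2) * x ^ 2 - 3 * t ^ 2 * x + t ^ 4 - t ^ 2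
    (∀ t : ℝ, 1 ≤ t → 0 < p t (t - 1 - 1 / (2 * t))) ∧
    (∀ h : ℝ, 2 < h → ∃ T : ℝ, ∀ t : ℝ, T ≤ t → p t (t - 1 - 1 / (h * t)) < 0) ∧
    (∀ h : ℝ, 2 < h → ∃ T : ℝ, ∀ t : ℝ, T ≤ t →
      ∃ lam₀ : ℝ, t - 1 - 1 / (2 * t) < lam₀ ∧ lam₀ < t - 1 - 1 / (h * t) ∧ p t lam₀ = 0) := by
  intro p
  refine ⟨fun t ht => pos_at t ht, fun h hh => ⟨2 + 14 / (h - 2), fun t ht => neg_at h t hh ht⟩,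
    fun h hh => ⟨2 + 14 / (h - 2), fun t ht => ?_⟩⟩
  have hc : (0:ℝ) < h - 2 := by linarith
  have ht2 : (2:ℝ) ≤ t := by
    have : 0 ≤ 14 / (h - 2) := by positivity
    linarith
  have ht0 : (0:ℝ) < t := by linarith
  have hh0 : (0:ℝ) < h := by linarith
  set x₁ := t - 1 - 1 / (2 * t) with hx1
  set x₂ := t - 1 - 1 / (h * t) with hx2
  have hxlt : x₁ < x₂ := by
    have : 1 / (h * t) < 1 / (2 * t) := by
      apply one_div_lt_one_div_of_lt (by positivity)
      nlinarith
    simp only [hx1, hx2]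
    linarith
  have hp1 : 0 < p t x₁ := pos_at t (by linarith)
  have hp2 : p t x₂ < 0 := neg_at h t hh ht
  have hcont : ContinuousOn (p t) (Set.Icc x₁ x₂) := by
    apply Continuous.continuousOn
    continuity
  have := intermediate_value_Ioo' (le_of_lt hxlt) hcont
  have h0 : (0:ℝ) ∈ Set.Ioo (p t x₂) (p t x₁) := ⟨hp2, hp1⟩
  obtain ⟨lam₀, hmem, heq⟩ := this h0
  exact ⟨lam₀, hmem.1, hmem.2, heq⟩
end

section
/- Let G be a finite simple graph with vertex set V and let S be a set of edges of G. Define the 2-lift Ĝ on vertex set V × {0, 1} by making (u, i) adjacent to (v, j) if and only if uv is an edge of G and either uv ∉ S and j = i, or uv ∈ S and j ≠ i. Let A⁻ be the matrix obtained from the adjacency matrix A of G by replacing the (u,v)- and (v,u)-entries by −1 for every edge uv ∈ S. Then the multiset of adjacency eigenvalues of Ĝ (with multiplicity) is the multiset union of the eigenvalues of A and the eigenvalues of A⁻; equivalently, the characteristic polynomial of the adjacency matrix of Ĝ is the product of the characteristic polynomials of A and A⁻. -/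
/-!
Ordering the vertices of the 2-lift as `V × {false}` followed by `V × {true}`, its adjacency
matrix becomes the block matrix `[[A₀, A₁], [A₁, A₀]]`, where `A₁` records the edges of `S` and
`A₀` the remaining edges of `G`. Such a block matrix is conjugate to the block triangular
matrix with diagonal blocks `A₀ + A₁ = A` and `A₀ - A₁ = A⁻`, so its characteristic polynomial
factors accordingly.
-/

open Polynomial

/-- The 2-lift of `G` determined by a set of edges `S`: vertex `(u, i)` is adjacent to
`(v, j)` iff `uv` is an edge of `G` and either `uv ∉ S` and `j = i`, or `uv ∈ S` and
`j ≠ i`. -/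
def twoLift {V : Type*} (G : SimpleGraph V) (S : Set (Sym2 V)) :
    SimpleGraph (V × Bool) where
  Adj p q := G.Adj p.1 q.1 ∧
    ((s(p.1, q.1) ∉ S ∧ q.2 = p.2) ∨ (s(p.1, q.1) ∈ S ∧ q.2 ≠ p.2))
  symm := by
    constructor
    rintro ⟨u, i⟩ ⟨v, j⟩ ⟨hadj, h⟩
    refine ⟨hadj.symm, ?_⟩
    rw [Sym2.eq_swap] at h
    rcases h with ⟨hS, hj⟩ | ⟨hS, hj⟩
    · exact Or.inl ⟨hS, hj.symm⟩
    · exact Or.inr ⟨hS, Ne.symm hj⟩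
  loopless := by
    constructor
    rintro ⟨u, i⟩ ⟨hadj, -⟩
    exact (G.ne_of_adj hadj) rfl

namespace Matrix

variable {n R : Type*} [Fintype n] [DecidableEq n] [CommRing R]

theorem det_fromBlocks_self_swap (A B : Matrix n n R) :
    (fromBlocks A B B A).det = (A + B).det * (A - B).det := by
  -- Add the second block row to the first, then subtract the first block column from the second.
  have triangularize : fromBlocks (1 : Matrix n n R) 1 0 1 * fromBlocks A B B A *
      fromBlocks (1 : Matrix n n R) (-1) 0 1 = fromBlocks (A + B) 0 B (A - B) := by
    simp only [fromBlocks_multiply, Matrix.mul_one, Matrix.one_mul, Matrix.mul_zero,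
      Matrix.zero_mul, Matrix.mul_neg, add_zero, zero_add]
    congr 1 <;> abel
  simpa [det_fromBlocks_zero₂₁, det_fromBlocks_zero₁₂] using congrArg det triangularize

theorem charmatrix_sub_map_C (A B : Matrix n n R) :
    A.charmatrix - B.map C = (A + B).charmatrix := by
  rw [charmatrix, charmatrix, RingHom.mapMatrix_apply, RingHom.mapMatrix_apply,
    Matrix.map_add _ (map_add C), sub_sub]

theorem charmatrix_add_map_C (A B : Matrix n n R) :
    A.charmatrix + B.map C = (A - B).charmatrix := by
  rw [charmatrix, charmatrix, RingHom.mapMatrix_apply, RingHom.mapMatrix_apply,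
    Matrix.map_sub _ (map_sub C), sub_sub_eq_add_sub, add_sub_right_comm]

theorem charpoly_fromBlocks_self_swap (A B : Matrix n n R) :
    (fromBlocks A B B A).charpoly = (A + B).charpoly * (A - B).charpoly := by
  rw [charpoly, charmatrix_fromBlocks, det_fromBlocks_self_swap, sub_neg_eq_add,
    ← sub_eq_add_neg, charmatrix_sub_map_C, charmatrix_add_map_C, charpoly, charpoly]

end Matrix

@[simp]
theorem twoLift_adj {V : Type*} (G : SimpleGraph V) (S : Set (Sym2 V)) (u v : V) (i j : Bool) :
    (twoLift G S).Adj (u, i) (v, j) ↔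
      G.Adj u v ∧ ((s(u, v) ∉ S ∧ j = i) ∨ (s(u, v) ∈ S ∧ j ≠ i)) :=
  Iff.rfl

namespace SimpleGraph

variable {V : Type*} (G : SimpleGraph V) [DecidableRel G.Adj]
  (S : Set (Sym2 V)) [DecidablePred (· ∈ S)] (R : Type*)

def adjMatrixIn [Zero R] [One R] : Matrix V V R :=
  Matrix.of fun u v => if G.Adj u v ∧ s(u, v) ∈ S then 1 else 0

def adjMatrixNotIn [Zero R] [One R] : Matrix V V R :=
  Matrix.of fun u v => if G.Adj u v ∧ s(u, v) ∉ S then 1 else 0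

theorem adjMatrixNotIn_add_adjMatrixIn [AddZeroClass R] [One R] :
    G.adjMatrixNotIn S R + G.adjMatrixIn S R = G.adjMatrix R := by
  ext u v
  by_cases hadj : G.Adj u v <;> by_cases hS : s(u, v) ∈ S <;>
    simp [adjMatrixNotIn, adjMatrixIn, hadj, hS]

theorem adjMatrixNotIn_sub_adjMatrixIn_apply [AddGroupWithOne R] (u v : V) :
    (G.adjMatrixNotIn S R - G.adjMatrixIn S R) u v =
      if G.Adj u v then (if s(u, v) ∈ S then -1 else 1) else 0 := by
  by_cases hadj : G.Adj u v <;> by_cases hS : s(u, v) ∈ S <;>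
    simp [adjMatrixNotIn, adjMatrixIn, hadj, hS]

variable [DecidableRel (twoLift G S).Adj]

theorem reindex_adjMatrix_twoLift [Zero R] [One R] :
    let e := (Equiv.prodComm V Bool).trans (Equiv.boolProdEquivSum V)
    Matrix.reindex e e ((twoLift G S).adjMatrix R) =
      Matrix.fromBlocks (G.adjMatrixNotIn S R) (G.adjMatrixIn S R)
        (G.adjMatrixIn S R) (G.adjMatrixNotIn S R) := by
  ext (u | u) (v | v) <;>
    simp [Equiv.boolProdEquivSum, adjMatrix_apply, adjMatrixNotIn, adjMatrixIn]

theorem charpoly_adjMatrix_twoLift [Fintype V] [DecidableEq V] [CommRing R] :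
    ((twoLift G S).adjMatrix R).charpoly =
      (G.adjMatrix R).charpoly * (G.adjMatrixNotIn S R - G.adjMatrixIn S R).charpoly := by
  rw [← Matrix.charpoly_reindex ((Equiv.prodComm V Bool).trans (Equiv.boolProdEquivSum V)),
    reindex_adjMatrix_twoLift, Matrix.charpoly_fromBlocks_self_swap,
    adjMatrixNotIn_add_adjMatrixIn]

end SimpleGraph

theorem charpoly_twoLift_general
    {V : Type} [Fintype V] [DecidableEq V] (G : SimpleGraph V) [DecidableRel G.Adj]
    (S : Set (Sym2 V)) [DecidablePred (· ∈ S)]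
    (Aminus : Matrix V V ℝ)
    (hAminus : ∀ u v, Aminus u v =
      if G.Adj u v then (if s(u, v) ∈ S then -1 else 1) else 0) :
    letI : DecidableRel (twoLift G S).Adj := Classical.decRel _
    ((twoLift G S).adjMatrix ℝ).charpoly = (G.adjMatrix ℝ).charpoly * Aminus.charpoly := by
  have hAminus' : Aminus = G.adjMatrixNotIn S ℝ - G.adjMatrixIn S ℝ :=
    Matrix.ext fun u v => (hAminus u v).trans
      (G.adjMatrixNotIn_sub_adjMatrixIn_apply S ℝ u v).symm
  classical
  rw [hAminus']
  exact G.charpoly_adjMatrix_twoLift S ℝ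

/-- (Bilu–Linial) Let `G` be a finite simple graph and `S` a set of edges of `G`. Let `Ĝ`
be the 2-lift of `G` determined by `S`, and let `A⁻` be the signed adjacency matrix of `G`
in which the entries corresponding to the edges of `S` are replaced by `-1`. Then the
characteristic polynomial of the adjacency matrix of `Ĝ` is the product of the
characteristic polynomials of the adjacency matrix `A` of `G` and of `A⁻`; equivalently,
the spectrum of `Ĝ` (with multiplicity) is the multiset union of the spectra of `A` and
`A⁻`. -/
theorem charpoly_twoLift
    {V : Type} [Fintype V] [DecidableEq V] (G : SimpleGraph V) [DecidableRel G.Adj]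
    (S : Set (Sym2 V)) [DecidablePred (· ∈ S)] (hS : S ⊆ G.edgeSet)
    (Aminus : Matrix V V ℝ)
    (hAminus : ∀ u v, Aminus u v =
      if G.Adj u v then (if s(u, v) ∈ S then -1 else 1) else 0) :
    letI : DecidableRel (twoLift G S).Adj := Classical.decRel _
    ((twoLift G S).adjMatrix ℝ).charpoly = (G.adjMatrix ℝ).charpoly * Aminus.charpoly :=
  charpoly_twoLift_general G S Aminus hAminus
end
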